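/- arXiv:1604.02830 — 3 statements merged into one kernel-verified Lean document; each statement's English description precedes it below -/
import Mathlib

section
/- Let f : F_2^n → Z_{2^k} be a gbent function. If n is even or k ≥ 3, then there exists a generalized Boolean function f* : F_2^n → Z_{2^k} (the dual of f) such that H_f(u) = 2^{n/2} ζ^{f*(u)} for all u ∈ F_2^n. If n is odd and k = 2, then for every u ∈ F_2^n one has H_f(u) = 2^{(n−1)/2}(ε_1 + ε_2 i) for some signs ε_1, ε_2 ∈ {+1, −1} (depending on u). -/
open scoped BigOperators

/-- `zeta q = e^{2πi/q}`, a primitive `q`-th root of unity. -/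
noncomputable def zeta (q : ℕ) : ℂ := Complex.exp (2 * Real.pi * Complex.I / (q : ℂ))

/-- The generalized Walsh-Hadamard transform of `f : F_2^n → Z_q`. -/
noncomputable def gwht (n q : ℕ) (f : (Fin n → ZMod 2) → ZMod q) (u : Fin n → ZMod 2) : ℂ :=
  ∑ x : Fin n → ZMod 2, zeta q ^ (f x).val * (-1 : ℂ) ^ (∑ i, u i * x i : ZMod 2).val

/-- `f` is gbent if `|H_f(u)| = 2^{n/2}` for all `u`. -/
def IsGbent (n q : ℕ) (f : (Fin n → ZMod 2) → ZMod q) : Prop :=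
  ∀ u, ‖gwht n q f u‖ = Real.sqrt 2 ^ n

/-- Walsh-Hadamard transform of a Boolean function. -/
noncomputable def wht (n : ℕ) (g : (Fin n → ZMod 2) → ZMod 2) (u : Fin n → ZMod 2) : ℂ :=
  ∑ x : Fin n → ZMod 2, (-1 : ℂ) ^ (g x + ∑ i, u i * x i : ZMod 2).val

/-- A Boolean function is bent if `|W_g(u)| = 2^{n/2}` for all `u`. -/
def IsBent (n : ℕ) (g : (Fin n → ZMod 2) → ZMod 2) : Prop :=
  ∀ u, ‖wht n g u‖ = Real.sqrt 2 ^ n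

/-- A Boolean function is semibent if `|W_g(u)| ∈ {0, 2^{(n+1)/2}}` for all `u`. -/
def IsSemibent (n : ℕ) (g : (Fin n → ZMod 2) → ZMod 2) : Prop :=
  ∀ u, wht n g u = 0 ∨ ‖wht n g u‖ = 2 ^ ((n + 1) / 2)

/-!
Let `q = 2 ^ k` with `k ≥ 2` and `K = ℚ(ζ_q)`. The value `α = H_f(u)` is an algebraic integer
of `K`, and `α ᾱ = |H_f(u)|² = 2 ^ n` is an identity in `K`, so `α ∣ 2 ^ n` and every
embedding of `α` has absolute value `2 ^ (n / 2)`. As `2` is totally ramified in `K`, both `α`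
and `(1 + i) ^ n` are associated to powers of the prime `ζ_q - 1`; one divides the other and
the quotient has absolute value `1` at every embedding, so by Kronecker's theorem it is a root
of unity, i.e. a power of `ζ_q`. Thus `H_f(u) = ζ_q ^ j (1 + i) ^ n`, and both cases follow from
`1 + i = √2 ζ_8` and `(1 + i) ^ 2 = 2 i`. For `k = 1`, `H_f(u)` is an integer of absolute value
`2 ^ (n / 2)`.
-/

open NumberField NumberField.Units Complex
open scoped ComplexConjugate

theorem Complex.norm_one_add_sq_of_sq_eq_neg_one {z : ℂ} (hz : z ^ 2 = -1) :
    ‖1 + z‖ ^ 2 = 2 := by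
  obtain rfl | rfl : z = I ∨ z = -I := by
    have : (z - I) * (z + I) = 0 := by linear_combination hz - I_sq
    rcases mul_eq_zero.mp this with h | h
    · exact .inl (sub_eq_zero.mp h)
    · exact .inr (eq_neg_of_add_eq_zero_left h)
  all_goals norm_num [Complex.sq_norm, normSq_apply]

namespace NumberField

variable {K : Type*} [Field K] [NumberField K]

theorem exists_mem_torsion_mul_of_dvd {a b : 𝓞 K} (ha : a ≠ 0) (hab : a ∣ b)
    (h : ∀ φ : K →+* ℂ, ‖φ a‖ = ‖φ b‖) : ∃ γ ∈ torsion K, b = γ * a := by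
  obtain ⟨c, rfl⟩ := hab
  have hc : ∀ φ : K →+* ℂ, ‖φ c‖ = 1 := fun φ ↦ by
    have hφa : ‖φ a‖ ≠ 0 := by simpa using ha
    simpa [hφa] using (h φ).symm
  obtain ⟨M, hM, hcM⟩ :=
    Embeddings.pow_eq_one_of_norm_eq_one K ℂ (RingOfIntegers.isIntegral_coe c) hc
  have hcM' : c ^ M = 1 := RingOfIntegers.coe_injective (by simpa using hcM)
  refine ⟨Units.ofPowEqOne c M hcM' hM.ne',
    isOfFinOrder_iff_pow_eq_one.mpr ⟨M, hM, Units.pow_ofPowEqOne _ _⟩, ?_⟩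
  rw [Units.val_ofPowEqOne, mul_comm]

theorem exists_mem_torsion_mul_of_associated_pow {p a b : 𝓞 K} (hp : Prime p) {i j : ℕ}
    (ha : Associated a (p ^ i)) (hb : Associated b (p ^ j))
    (h : ∀ φ : K →+* ℂ, ‖φ a‖ = ‖φ b‖) : ∃ γ ∈ torsion K, b = γ * a := by
  rcases le_total i j with hij | hji
  · refine exists_mem_torsion_mul_of_dvd ?_ ?_ h
    · exact ha.ne_zero_iff.mpr (pow_ne_zero _ hp.ne_zero)
    · exact ha.dvd.trans ((pow_dvd_pow p hij).trans hb.symm.dvd)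
  · obtain ⟨γ, hγ, hab⟩ := exists_mem_torsion_mul_of_dvd
      (hb.ne_zero_iff.mpr (pow_ne_zero _ hp.ne_zero))
      (hb.dvd.trans ((pow_dvd_pow p hji).trans ha.symm.dvd)) fun φ ↦ (h φ).symm
    exact ⟨γ⁻¹, inv_mem hγ, by rw [hab, ← mul_assoc, Units.inv_mul, one_mul]⟩

end NumberField

namespace IsPrimitiveRoot

variable {K : Type*} [Field K] [NumberField K]

theorem exists_pow_eq_of_mem_torsion {n : ℕ} [NeZero n] [IsCyclotomicExtension {n} ℚ K]
    (hn : Even n) {ζ : K} (hζ : IsPrimitiveRoot ζ n) {γ : (𝓞 K)ˣ} (hγ : γ ∈ torsion K) :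
    ∃ j : ℕ, ((γ : 𝓞 K) : K) = ζ ^ j := by
  have hγn : ((γ : 𝓞 K) : K) ^ n = 1 := by
    have h := pow_card_eq_one' (G := torsion K) (x := ⟨γ, hγ⟩)
    rw [← torsionOrder, IsCyclotomicExtension.Rat.torsionOrder_eq (n := n), if_pos hn] at h
    simpa using congrArg (fun x : torsion K ↦ (((x : (𝓞 K)ˣ) : 𝓞 K) : K)) h
  obtain ⟨j, -, hj⟩ := hζ.eq_pow_of_pow_eq_one hγn
  exact ⟨j, hj.symm⟩

theorem associated_two_toInteger_sub_one_pow {k : ℕ} [IsCyclotomicExtension {2 ^ (k + 1)} ℚ K]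
    {ζ : K} (hζ : IsPrimitiveRoot ζ (2 ^ (k + 1))) :
    Associated (2 : 𝓞 K) ((hζ.toInteger - 1) ^ Module.finrank ℚ K) := by
  have := IsCyclotomicExtension.Rat.map_eq_span_zeta_sub_one_pow 2 k hζ
  rw [Ideal.map_span, Set.image_singleton, Ideal.span_singleton_pow] at this
  exact Ideal.span_singleton_eq_span_singleton.mp (by simpa using this)

theorem exists_eq_pow_mul_one_add_pow {k : ℕ} [IsCyclotomicExtension {2 ^ (k + 1)} ℚ K]
    {ζ : K} (hζ : IsPrimitiveRoot ζ (2 ^ (k + 1))) {ι : 𝓞 K} (hι : ι ^ 2 = -1) {n : ℕ}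
    {α : 𝓞 K} (hα : α ∣ 2 ^ n) (hnorm : ∀ φ : K →+* ℂ, ‖φ α‖ ^ 2 = 2 ^ n) :
    ∃ j : ℕ, (α : K) = ζ ^ j * (((1 + ι) ^ n : 𝓞 K) : K) := by
  have hπ := hζ.zeta_sub_one_prime
  have h2 := (hζ.associated_two_toInteger_sub_one_pow).pow_pow (n := n)
  rw [← pow_mul] at h2
  obtain ⟨a, -, ha⟩ := (dvd_prime_pow hπ _).mp (hα.trans h2.dvd)
  have hι2 : (1 + ι) ^ n ∣ 2 ^ n := pow_dvd_pow_of_dvd ⟨1 - ι, by linear_combination hι⟩ n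
  obtain ⟨b, -, hb⟩ := (dvd_prime_pow hπ _).mp (hι2.trans h2.dvd)
  have hnorm_eq (φ : K →+* ℂ) : ‖φ ((1 + ι) ^ n : 𝓞 K)‖ = ‖φ α‖ := by
    refine (pow_left_inj₀ (norm_nonneg _) (norm_nonneg _) two_ne_zero).mp ?_
    have hφι : (φ ι) ^ 2 = -1 := by
      rw [← map_pow, ← map_pow, hι]; simp
    rw [hnorm, RingOfIntegers.coe_eq_algebraMap, map_pow, map_pow, norm_pow, ← pow_mul,
      mul_comm, pow_mul, map_add, map_add, map_one, map_one,
      Complex.norm_one_add_sq_of_sq_eq_neg_one hφι]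
  obtain ⟨γ, hγ, hαγ⟩ := exists_mem_torsion_mul_of_associated_pow hπ hb ha hnorm_eq
  obtain ⟨j, hj⟩ :=
    hζ.exists_pow_eq_of_mem_torsion (Nat.even_pow.mpr ⟨even_two, by omega⟩) hγ
  exact ⟨j, by rw [hαγ, RingOfIntegers.coe_eq_algebraMap, map_mul, ← hj]⟩

end IsPrimitiveRoot

theorem IsPrimitiveRoot.pow_two_pow_sq_eq_neg_one {R : Type*} [CommRing R] [IsDomain R] {k : ℕ}
    {ζ : R} (hζ : IsPrimitiveRoot ζ (2 ^ (k + 2))) : (ζ ^ 2 ^ k) ^ 2 = -1 := by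
  have h := hζ.pow_of_dvd (p := 2 ^ (k + 1)) (by positivity) (pow_dvd_pow 2 (by omega))
  rw [Nat.pow_div (by omega) two_pos, show k + 2 - (k + 1) = 1 by omega, pow_one] at h
  rw [← pow_mul, ← pow_succ, h.eq_neg_one_of_two_right]

theorem IsPrimitiveRoot.exists_ringHom_apply_eq {K : Type*} [Field K] [CharZero K] {m : ℕ}
    [NeZero m] [IsCyclotomicExtension {m} ℚ K] {ζ : K} (hζ : IsPrimitiveRoot ζ m) {ξ : ℂ}
    (hξ : IsPrimitiveRoot ξ m) : ∃ φ : K →+* ℂ, φ ζ = ξ := by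
  have hirr := Polynomial.cyclotomic.irreducible_rat (NeZero.pos m)
  set e := hζ.embeddingsEquivPrimitiveRoots ℂ hirr
  refine ⟨(e.symm ⟨ξ, (mem_primitiveRoots (NeZero.pos m)).mpr hξ⟩).toRingHom, ?_⟩
  have h := hζ.embeddingsEquivPrimitiveRoots_apply_coe ℂ hirr
    (e.symm ⟨ξ, (mem_primitiveRoots (NeZero.pos m)).mpr hξ⟩)
  rw [Equiv.apply_symm_apply] at h
  exact h.symm

theorem zeta_mul_pow (a b : ℕ) (ha : a ≠ 0) : zeta (a * b) ^ a = zeta b := by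
  rw [zeta, zeta, ← exp_nat_mul]
  congr 1
  push_cast
  field_simp

theorem zeta_two : zeta 2 = -1 := by
  rw [zeta, show 2 * (Real.pi : ℂ) * I / ((2 : ℕ) : ℂ) = Real.pi * I by push_cast; ring,
    exp_pi_mul_I]

theorem zeta_four : zeta 4 = I := by
  rw [zeta, show 2 * (Real.pi : ℂ) * I / ((4 : ℕ) : ℂ) = Real.pi / 2 * I by push_cast; ring,
    exp_pi_div_two_mul_I]

theorem sqrt_two_mul_zeta_eight : (Real.sqrt 2 : ℂ) * zeta 8 = 1 + I := by
  rw [zeta, show 2 * (Real.pi : ℂ) * I / ((8 : ℕ) : ℂ) = (Real.pi / 4 : ℝ) * I by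
    push_cast; ring, exp_mul_I, ← ofReal_cos, ← ofReal_sin, Real.cos_pi_div_four,
    Real.sin_pi_div_four]
  have h : (Real.sqrt 2 : ℂ) ^ 2 = 2 := by
    rw [← ofReal_pow, Real.sq_sqrt zero_le_two, ofReal_ofNat]
  push_cast
  linear_combination (1 + I) / 2 * h

theorem isPrimitiveRoot_zeta (q : ℕ) [NeZero q] : IsPrimitiveRoot (zeta q) q := by
  simpa [zeta] using isPrimitiveRoot_exp q (NeZero.ne q)

theorem zeta_pow_val_natCast (q a : ℕ) [NeZero q] : zeta q ^ (a : ZMod q).val = zeta q ^ a := by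
  rw [ZMod.val_natCast, ← pow_eq_pow_mod a (isPrimitiveRoot_zeta q).pow_eq_one]

section Walsh

variable {n q : ℕ} (f : (Fin n → ZMod 2) → ZMod q) (u : Fin n → ZMod 2)

noncomputable def walshSum {R : Type*} [CommRing R] (ξ : R) : R :=
  ∑ x : Fin n → ZMod 2, ξ ^ (f x).val * (-1 : R) ^ (∑ i, u i * x i : ZMod 2).val

theorem gwht_eq_walshSum : gwht n q f u = walshSum f u (zeta q) := rfl

theorem map_walshSum {R S : Type*} [CommRing R] [CommRing S] (φ : R →+* S) (ξ : R) :
    φ (walshSum f u ξ) = walshSum f u (φ ξ) := by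
  simp [walshSum]

theorem walshSum_mul_walshSum_pow_sub_one [NeZero q] {ξ : ℂ} (hξ : ξ ^ q = 1) :
    walshSum f u ξ * walshSum f u (ξ ^ (q - 1)) = ‖walshSum f u ξ‖ ^ 2 := by
  have hconj : conj ξ = ξ ^ (q - 1) := by
    rw [← inv_eq_conj (norm_eq_one_of_pow_eq_one hξ (NeZero.ne q))]
    refine inv_eq_of_mul_eq_one_right ?_
    rw [← pow_succ', Nat.sub_add_cancel NeZero.one_le, hξ]
  rw [← mul_conj', map_walshSum, hconj]

end Walsh

theorem IsGbent.exists_gwht_eq_zeta_pow_mul_of_isCyclotomicExtension (K : Type*) [Field K]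
    [NumberField K] {n k : ℕ} [IsCyclotomicExtension {2 ^ (k + 2)} ℚ K]
    {f : (Fin n → ZMod 2) → ZMod (2 ^ (k + 2))}
    (hf : IsGbent n (2 ^ (k + 2)) f) (u : Fin n → ZMod 2) :
    ∃ j : ℕ, gwht n (2 ^ (k + 2)) f u = zeta (2 ^ (k + 2)) ^ j * (1 + I) ^ n := by
  obtain ⟨ζ, hζ⟩ := IsCyclotomicExtension.exists_isPrimitiveRoot ℚ K
    (Set.mem_singleton (2 ^ (k + 2))) (by positivity)
  obtain ⟨φ₀, hφ₀⟩ := hζ.exists_ringHom_apply_eq (isPrimitiveRoot_zeta _)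
  have hζO := hζ.toInteger_isPrimitiveRoot
  set α : 𝓞 K := walshSum f u hζ.toInteger
  set β : 𝓞 K := walshSum f u (hζ.toInteger ^ (2 ^ (k + 2) - 1))
  have hαβ : ∀ ψ : 𝓞 K →+* ℂ, ψ (α * β) = ‖ψ α‖ ^ 2 := fun ψ ↦ by
    rw [map_mul, map_walshSum, map_walshSum, map_pow, walshSum_mul_walshSum_pow_sub_one f u
      (by rw [← map_pow, hζO.pow_eq_one, map_one])]
  set ψ₀ := φ₀.comp (algebraMap (𝓞 K) K)
  have hψ₀α : ψ₀ α = gwht n (2 ^ (k + 2)) f u := by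
    rw [map_walshSum]; exact congrArg _ hφ₀
  have hαβ2 : α * β = 2 ^ n := by
    refine (φ₀.injective.comp RingOfIntegers.coe_injective :) ?_
    change ψ₀ (α * β) = ψ₀ (2 ^ n)
    rw [hαβ, hψ₀α, hf u, map_pow, map_ofNat, ← ofReal_pow, ← pow_mul, mul_comm, pow_mul,
      Real.sq_sqrt zero_le_two]
    push_cast; rfl
  have hnorm : ∀ φ : K →+* ℂ, ‖φ α‖ ^ 2 = 2 ^ n := fun φ ↦ by
    have h := hαβ (φ.comp (algebraMap (𝓞 K) K))
    rw [hαβ2, map_pow, map_ofNat] at h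
    exact_mod_cast h.symm
  obtain ⟨j, hj⟩ :=
    hζ.exists_eq_pow_mul_one_add_pow hζO.pow_two_pow_sq_eq_neg_one ⟨β, hαβ2.symm⟩ hnorm
  have hI : zeta (2 ^ (k + 2)) ^ 2 ^ k = I := by
    rw [show 2 ^ (k + 2) = 2 ^ k * 4 by ring, zeta_mul_pow _ _ (by positivity), zeta_four]
  refine ⟨j, ?_⟩
  rw [← hψ₀α]
  change φ₀ α = _
  have hζK : algebraMap (𝓞 K) K hζ.toInteger = ζ := rfl
  rw [hj, RingOfIntegers.coe_eq_algebraMap]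
  simp only [map_mul, map_pow, map_add, map_one, hζK, hφ₀, hI]

theorem IsGbent.exists_gwht_eq_zeta_pow_mul {n k : ℕ}
    {f : (Fin n → ZMod 2) → ZMod (2 ^ (k + 2))} (hf : IsGbent n (2 ^ (k + 2)) f)
    (u : Fin n → ZMod 2) :
    ∃ j : ℕ, gwht n (2 ^ (k + 2)) f u = zeta (2 ^ (k + 2)) ^ j * (1 + I) ^ n :=
  -- given by hand: instance search does not identify `CyclotomicField.algebra` with the
  -- `Algebra ℚ` structure coming from the field of characteristic zero
  have : IsCyclotomicExtension {2 ^ (k + 2)} ℚ (CyclotomicField (2 ^ (k + 2)) ℚ) :=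
    CyclotomicField.isCyclotomicExtension _ ℚ
  hf.exists_gwht_eq_zeta_pow_mul_of_isCyclotomicExtension (CyclotomicField (2 ^ (k + 2)) ℚ) u

theorem one_add_I_sq : (1 + I) ^ 2 = 2 * I := by
  linear_combination I_sq

theorem one_add_I_pow_eq_sqrt_two_pow_mul_zeta_pow {n k : ℕ} (hk : 2 ≤ k)
    (h : Even n ∨ 3 ≤ k) :
    ∃ e : ℕ, (1 + I) ^ n = (Real.sqrt 2 ^ n : ℝ) * zeta (2 ^ k) ^ e := by
  rcases le_or_gt 3 k with hk3 | hk3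
  · obtain ⟨m, rfl⟩ : ∃ m, k = m + 3 := ⟨k - 3, by omega⟩
    refine ⟨2 ^ m * n, ?_⟩
    rw [show 2 ^ (m + 3) = 2 ^ m * 8 by ring, pow_mul, zeta_mul_pow _ _ (by positivity),
      ← sqrt_two_mul_zeta_eight, mul_pow]
    push_cast; ring
  · obtain ⟨t, rfl⟩ := h.resolve_right (by omega)
    obtain rfl : k = 2 := by omega
    refine ⟨t, ?_⟩
    rw [← two_mul, pow_mul, pow_mul, one_add_I_sq, Real.sq_sqrt zero_le_two, mul_pow,
      show zeta (2 ^ 2) = I from zeta_four]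
    push_cast; ring

theorem exists_signs_I_pow_mul_one_add_I (r : ℕ) :
    ∃ ε₁ ε₂ : ℂ, (ε₁ = 1 ∨ ε₁ = -1) ∧ (ε₂ = 1 ∨ ε₂ = -1) ∧
      I ^ r * (1 + I) = ε₁ + ε₂ * I := by
  induction r with
  | zero => exact ⟨1, 1, .inl rfl, .inl rfl, by ring⟩
  | succ r ih =>
    obtain ⟨ε₁, ε₂, h₁, h₂, h⟩ := ih
    refine ⟨-ε₂, ε₁, by rcases h₂ with rfl | rfl <;> simp, h₁, ?_⟩
    rw [pow_succ', mul_assoc, h]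
    linear_combination ε₂ * I_sq

theorem gwht_two_eq_intCast {n : ℕ} (f : (Fin n → ZMod 2) → ZMod (2 ^ 1))
    (u : Fin n → ZMod 2) :
    gwht n (2 ^ 1) f u = ((walshSum f u (-1 : ℤ) : ℤ) : ℂ) := by
  have h := map_walshSum f u (Int.castRingHom ℂ) (-1)
  rw [map_neg, map_one, Int.coe_castRingHom] at h
  rw [gwht_eq_walshSum, show zeta (2 ^ 1) = -1 from zeta_two, ← h]

theorem IsGbent.exists_dual_of_two_pow_one {n : ℕ} {f : (Fin n → ZMod 2) → ZMod (2 ^ 1)}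
    (hf : IsGbent n (2 ^ 1) f) (hn : Even n) (u : Fin n → ZMod 2) :
    ∃ c : ZMod (2 ^ 1), gwht n (2 ^ 1) f u = (Real.sqrt 2 ^ n : ℝ) * zeta (2 ^ 1) ^ c.val := by
  obtain ⟨t, rfl⟩ := hn
  have hs : Real.sqrt 2 ^ (t + t) = 2 ^ t := by
    rw [← two_mul, pow_mul, Real.sq_sqrt zero_le_two]
  have hm : |walshSum f u (-1 : ℤ)| = 2 ^ t := by
    have := hf u
    rw [gwht_two_eq_intCast, norm_intCast, hs] at this
    exact_mod_cast this
  rw [gwht_two_eq_intCast, hs, show zeta (2 ^ 1) = -1 from zeta_two]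
  rcases abs_eq (by positivity) |>.mp hm with h | h
  · exact ⟨0, by rw [h]; simp⟩
  · exact ⟨1, by rw [h]; simp [show (1 : ZMod 2).val = 1 by rfl]⟩

theorem IsGbent.exists_dual_of_two_le {n k : ℕ} {f : (Fin n → ZMod 2) → ZMod (2 ^ k)}
    (hf : IsGbent n (2 ^ k) f) (hk : 2 ≤ k) (h : Even n ∨ 3 ≤ k) (u : Fin n → ZMod 2) :
    ∃ c : ZMod (2 ^ k), gwht n (2 ^ k) f u = (Real.sqrt 2 ^ n : ℝ) * zeta (2 ^ k) ^ c.val := by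
  obtain ⟨m, rfl⟩ : ∃ m, k = m + 2 := ⟨k - 2, by omega⟩
  obtain ⟨j, hj⟩ := hf.exists_gwht_eq_zeta_pow_mul u
  obtain ⟨e, he⟩ := one_add_I_pow_eq_sqrt_two_pow_mul_zeta_pow hk h
  refine ⟨(j + e : ℕ), ?_⟩
  rw [hj, he, zeta_pow_val_natCast, pow_add]
  ring

theorem IsGbent.exists_gwht_eq_signs_of_odd {n : ℕ} {f : (Fin n → ZMod 2) → ZMod (2 ^ 2)}
    (hf : IsGbent n (2 ^ 2) f) (hn : Odd n) (u : Fin n → ZMod 2) :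
    ∃ ε₁ ε₂ : ℂ, (ε₁ = 1 ∨ ε₁ = -1) ∧ (ε₂ = 1 ∨ ε₂ = -1) ∧
      gwht n (2 ^ 2) f u = (2 : ℂ) ^ ((n - 1) / 2) * (ε₁ + ε₂ * I) := by
  obtain ⟨t, rfl⟩ := hn
  obtain ⟨j, hj⟩ := hf.exists_gwht_eq_zeta_pow_mul (k := 0) u
  obtain ⟨ε₁, ε₂, h₁, h₂, h⟩ := exists_signs_I_pow_mul_one_add_I (j + t)
  refine ⟨ε₁, ε₂, h₁, h₂, ?_⟩
  rw [hj, show (2 * t + 1 - 1) / 2 = t by omega, ← h, show zeta (2 ^ (0 + 2)) = I from zeta_four,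
    pow_succ, pow_mul, one_add_I_sq, mul_pow, pow_add]
  ring

theorem statement_1_general (n k : ℕ) (hk : 1 ≤ k)
    (f : (Fin n → ZMod 2) → ZMod (2 ^ k)) (hf : IsGbent n (2 ^ k) f) :
    ((Even n ∨ 3 ≤ k) →
      ∃ fstar : (Fin n → ZMod 2) → ZMod (2 ^ k),
        ∀ u, gwht n (2 ^ k) f u =
          ((Real.sqrt 2 ^ n : ℝ) : ℂ) * zeta (2 ^ k) ^ (fstar u).val) ∧
    ((Odd n ∧ k = 2) →
      ∀ u, ∃ ε₁ ε₂ : ℂ, (ε₁ = 1 ∨ ε₁ = -1) ∧ (ε₂ = 1 ∨ ε₂ = -1) ∧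
        gwht n (2 ^ k) f u = (2 : ℂ) ^ ((n - 1) / 2) * (ε₁ + ε₂ * Complex.I)) := by
  refine ⟨fun h ↦ ?_, fun ⟨hn, hk2⟩ ↦ ?_⟩
  · have hdual : ∀ u, ∃ c : ZMod (2 ^ k),
        gwht n (2 ^ k) f u = (Real.sqrt 2 ^ n : ℝ) * zeta (2 ^ k) ^ c.val := by
      rcases eq_or_lt_of_le hk with rfl | hk2
      · exact hf.exists_dual_of_two_pow_one (h.resolve_right (by omega))
      · exact hf.exists_dual_of_two_le hk2 h
    choose fstar hfstar using hdual
    exact ⟨fstar, hfstar⟩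
  · subst hk2
    exact hf.exists_gwht_eq_signs_of_odd hn

theorem statement_1 (n k : ℕ) (hn : 1 ≤ n) (hk : 1 ≤ k)
    (f : (Fin n → ZMod 2) → ZMod (2 ^ k)) (hf : IsGbent n (2 ^ k) f) :
    ((Even n ∨ 3 ≤ k) →
      ∃ fstar : (Fin n → ZMod 2) → ZMod (2 ^ k),
        ∀ u, gwht n (2 ^ k) f u =
          ((Real.sqrt 2 ^ n : ℝ) : ℂ) * zeta (2 ^ k) ^ (fstar u).val) ∧
    ((Odd n ∧ k = 2) →
      ∀ u, ∃ ε₁ ε₂ : ℂ, (ε₁ = 1 ∨ ε₁ = -1) ∧ (ε₂ = 1 ∨ ε₂ = -1) ∧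
        gwht n (2 ^ k) f u = (2 : ℂ) ^ ((n - 1) / 2) * (ε₁ + ε₂ * Complex.I)) :=
  statement_1_general n k hk f hf
end

section
/- Let f : F_2^n → Z_{2^k} be gbent with n even or k ≥ 3, and let f* : F_2^n → Z_{2^k} be its dual, i.e., H_f(u) = 2^{n/2} ζ^{f*(u)} for all u. Then f* is also gbent, and the dual of f* is f, i.e., H_{f*}(u) = 2^{n/2} ζ^{f(u)} for all u ∈ F_2^n. -/
open scoped BigOperators

/-! The characters `x ↦ (-1)^(u·x)` of `F_2^n` are orthogonal, which gives the inversion formula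
`∑ₓ H_f(x) (-1)^(u·x) = 2^n ζ^{f(u)}`. Substituting `H_f = 2^{n/2} ζ^{f*}` turns it into
`H_{f*}(u) = 2^{n/2} ζ^{f(u)}`, and `f*` is gbent because `|ζ| = 1`. -/

lemma norm_zeta (q : ℕ) : ‖zeta q‖ = 1 := by
  simp [zeta, Complex.norm_exp, Complex.div_re, Complex.mul_re, Complex.mul_im]

section NegOnePow

variable {R : Type*}

lemma neg_one_pow_val_add [Ring R] (a b : ZMod 2) :
    (-1 : R) ^ (a + b).val = (-1) ^ a.val * (-1) ^ b.val := by
  rw [ZMod.val_add, ← neg_one_pow_eq_pow_mod_two, pow_add]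

lemma neg_one_pow_val_sum [CommRing R] {ι : Type*} (s : Finset ι) (g : ι → ZMod 2) :
    (-1 : R) ^ (∑ i ∈ s, g i).val = ∏ i ∈ s, (-1) ^ (g i).val :=
  map_prod (⟨⟨fun a : Multiplicative (ZMod 2) => (-1 : R) ^ a.toAdd.val, by simp⟩,
    fun a b => neg_one_pow_val_add a.toAdd b.toAdd⟩ : Multiplicative (ZMod 2) →* R) _ _

lemma sum_neg_one_pow_val_mul [Ring R] (a : ZMod 2) :
    ∑ b : ZMod 2, (-1 : R) ^ (a * b).val = if a = 0 then 2 else 0 := by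
  rw [show ∑ b : ZMod 2, (-1 : R) ^ (a * b).val = (-1) ^ (a * 0).val + (-1) ^ (a * 1).val from
    Fin.sum_univ_two _]
  rcases (by decide : ∀ c : ZMod 2, c = 0 ∨ c = 1) a with rfl | rfl
  · norm_num
  · simp [ZMod.val_one]

lemma sum_neg_one_pow_dotProduct [CommRing R] (n : ℕ) (w : Fin n → ZMod 2) :
    ∑ x : Fin n → ZMod 2, (-1 : R) ^ (∑ i, w i * x i).val = if w = 0 then 2 ^ n else 0 := by
  simp_rw [neg_one_pow_val_sum]
  rw [← Fintype.prod_sum (fun i b => (-1 : R) ^ (w i * b).val)]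
  simp_rw [sum_neg_one_pow_val_mul, Finset.prod_ite_zero]
  simp [funext_iff]

end NegOnePow

theorem sum_gwht_mul_neg_one_pow (n q : ℕ) (f : (Fin n → ZMod 2) → ZMod q)
    (u : Fin n → ZMod 2) :
    ∑ x, gwht n q f x * (-1 : ℂ) ^ (∑ i, u i * x i).val = 2 ^ n * zeta q ^ (f u).val := by
  have hchar : ∀ x y : Fin n → ZMod 2,
      (-1 : ℂ) ^ (∑ i, x i * y i).val * (-1) ^ (∑ i, u i * x i).val
        = (-1) ^ (∑ i, (y i + u i) * x i).val := by
    intro x y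
    rw [← neg_one_pow_val_add, ← Finset.sum_add_distrib]
    congr 2
    exact Finset.sum_congr rfl fun i _ => by ring
  calc ∑ x, gwht n q f x * (-1 : ℂ) ^ (∑ i, u i * x i).val
      = ∑ y, zeta q ^ (f y).val *
          ∑ x : Fin n → ZMod 2, (-1 : ℂ) ^ (∑ i, (y i + u i) * x i).val := by
        simp_rw [gwht, Finset.sum_mul, Finset.mul_sum, mul_assoc, hchar]
        exact Finset.sum_comm
    _ = ∑ y : Fin n → ZMod 2, zeta q ^ (f y).val * if y = u then 2 ^ n else 0 := by
        have hzero : ∀ y : Fin n → ZMod 2, (fun i => y i + u i) = 0 ↔ y = u := fun y => by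
          simp only [funext_iff, Pi.zero_apply, CharTwo.add_eq_zero]
        simp_rw [sum_neg_one_pow_dotProduct, hzero]
    _ = 2 ^ n * zeta q ^ (f u).val := by simp [mul_comm]

theorem gwht_dual_of_gwht_eq (n q : ℕ) (f fstar : (Fin n → ZMod 2) → ZMod q)
    (hdual : ∀ u, gwht n q f u = ((Real.sqrt 2 ^ n : ℝ) : ℂ) * zeta q ^ (fstar u).val)
    (u : Fin n → ZMod 2) :
    gwht n q fstar u = ((Real.sqrt 2 ^ n : ℝ) : ℂ) * zeta q ^ (f u).val := by
  have hc : ((Real.sqrt 2 ^ n : ℝ) : ℂ) ≠ 0 := Complex.ofReal_ne_zero.mpr (by positivity)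
  have hc_sq : ((Real.sqrt 2 ^ n : ℝ) : ℂ) * ((Real.sqrt 2 ^ n : ℝ) : ℂ) = 2 ^ n := by
    rw [← Complex.ofReal_mul, ← mul_pow, Real.mul_self_sqrt zero_le_two]
    push_cast; rfl
  set c : ℂ := ((Real.sqrt 2 ^ n : ℝ) : ℂ)
  calc gwht n q fstar u
      = c⁻¹ * ∑ x, gwht n q f x * (-1 : ℂ) ^ (∑ i, u i * x i).val := by
        simp_rw [hdual, Finset.mul_sum]
        rw [gwht]
        exact Finset.sum_congr rfl fun x _ => by field_simp
    _ = c * zeta q ^ (f u).val := by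
        rw [sum_gwht_mul_neg_one_pow, ← hc_sq]
        field_simp

theorem statement_2_general (n k : ℕ)
    (f fstar : (Fin n → ZMod 2) → ZMod (2 ^ k))
    (hdual : ∀ u, gwht n (2 ^ k) f u =
      ((Real.sqrt 2 ^ n : ℝ) : ℂ) * zeta (2 ^ k) ^ (fstar u).val) :
    IsGbent n (2 ^ k) fstar ∧
      ∀ u, gwht n (2 ^ k) fstar u =
        ((Real.sqrt 2 ^ n : ℝ) : ℂ) * zeta (2 ^ k) ^ (f u).val := by
  have hdual' := gwht_dual_of_gwht_eq n (2 ^ k) f fstar hdual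
  refine ⟨fun u => ?_, hdual'⟩
  rw [hdual' u, norm_mul, norm_pow, norm_zeta, one_pow, mul_one, Complex.norm_real,
    Real.norm_eq_abs, abs_of_nonneg (by positivity)]

theorem statement_2 (n k : ℕ) (hn : 1 ≤ n) (hk : 1 ≤ k) (hnk : Even n ∨ 3 ≤ k)
    (f fstar : (Fin n → ZMod 2) → ZMod (2 ^ k)) (hf : IsGbent n (2 ^ k) f)
    (hdual : ∀ u, gwht n (2 ^ k) f u =
      ((Real.sqrt 2 ^ n : ℝ) : ℂ) * zeta (2 ^ k) ^ (fstar u).val) :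
    IsGbent n (2 ^ k) fstar ∧
      ∀ u, gwht n (2 ^ k) fstar u =
        ((Real.sqrt 2 ^ n : ℝ) : ℂ) * zeta (2 ^ k) ^ (f u).val :=
  statement_2_general n k f fstar hdual
end

section
/- Let k ≥ 1, ζ = e^{2πi/2^k}, and for c = (c_0, c_1, …, c_{k−1}) ∈ F_2^k set A_c = 2^{−k} ∏_{j=0}^{k−1} (1 + ζ^{2^j + c_j 2^{k−1}}). Then for all ε_0, ε_1, …, ε_{k−1} ∈ {0, 1} one has ζ^{Σ_{j=0}^{k−1} 2^j ε_j} = Σ_{c ∈ F_2^k} A_c (−1)^{Σ_{j=0}^{k−1} c_j ε_j}. -/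
open scoped BigOperators

lemma zeta_half (k : ℕ) (hk : 1 ≤ k) : zeta (2 ^ k) ^ (2 ^ (k - 1)) = -1 := by
  unfold zeta
  rw [← Complex.exp_nat_mul]
  rw [show ((2 ^ (k-1) : ℕ) : ℂ) * (2 * Real.pi * Complex.I / ((2 ^ k : ℕ) : ℂ)) =
      Real.pi * Complex.I from ?_, Complex.exp_pi_mul_I]
  have h2 : (2:ℕ) ^ k = 2 ^ (k-1) * 2 := by
    rw [← pow_succ]; congr 1; omega
  rw [h2]
  push_cast
  have : ((2:ℂ) ^ (k-1)) ≠ 0 := pow_ne_zero _ two_ne_zero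
  field_simp

theorem statement_10 (k : ℕ) (hk : 1 ≤ k) (ε : Fin k → ZMod 2) :
    zeta (2 ^ k) ^ (∑ j : Fin k, 2 ^ (j : ℕ) * (ε j).val) =
      ∑ c : Fin k → ZMod 2,
        (((2 : ℂ) ^ k)⁻¹ *
            ∏ j : Fin k, (1 + zeta (2 ^ k) ^ (2 ^ (j : ℕ) + (c j).val * 2 ^ (k - 1)))) *
          (-1 : ℂ) ^ (∑ j : Fin k, (c j).val * (ε j).val) := by
  set z := zeta (2 ^ k) with hz
  have hzh : z ^ (2 ^ (k - 1)) = -1 := zeta_half k hk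
  have step1 : ∀ c : Fin k → ZMod 2,
      (((2 : ℂ) ^ k)⁻¹ *
            ∏ j : Fin k, (1 + z ^ (2 ^ (j : ℕ) + (c j).val * 2 ^ (k - 1)))) *
          (-1 : ℂ) ^ (∑ j : Fin k, (c j).val * (ε j).val)
      = ((2 : ℂ) ^ k)⁻¹ * ∏ j : Fin k,
          ((1 + z ^ (2 ^ (j : ℕ) + (c j).val * 2 ^ (k - 1))) *
            (-1 : ℂ) ^ ((c j).val * (ε j).val)) := by
    intro c
    rw [Finset.prod_mul_distrib, Finset.prod_pow_eq_pow_sum]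
    ring
  simp only [step1]
  rw [← Finset.mul_sum]
  have step2 : (∑ c : Fin k → ZMod 2, ∏ j : Fin k,
      ((1 + z ^ (2 ^ (j : ℕ) + (c j).val * 2 ^ (k - 1))) *
        (-1 : ℂ) ^ ((c j).val * (ε j).val)))
      = ∏ j : Fin k, ∑ x : ZMod 2,
          ((1 + z ^ (2 ^ (j : ℕ) + x.val * 2 ^ (k - 1))) *
            (-1 : ℂ) ^ (x.val * (ε j).val)) := by
    rw [Finset.prod_univ_sum, Fintype.piFinset_univ]
  rw [step2]
  have step3 : ∀ j : Fin k,
      (∑ x : ZMod 2, ((1 + z ^ (2 ^ (j : ℕ) + x.val * 2 ^ (k - 1))) *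
            (-1 : ℂ) ^ (x.val * (ε j).val)))
      = 2 * (z ^ (2 ^ (j:ℕ))) ^ (ε j).val := by
    intro j
    rw [show (∑ x : ZMod 2, ((1 + z ^ (2 ^ (j : ℕ) + x.val * 2 ^ (k - 1))) *
              (-1 : ℂ) ^ (x.val * (ε j).val)))
        = ((1 + z ^ (2 ^ (j : ℕ) + (0 : ZMod 2).val * 2 ^ (k - 1))) *
              (-1 : ℂ) ^ ((0 : ZMod 2).val * (ε j).val))
          + ((1 + z ^ (2 ^ (j : ℕ) + (1 : ZMod 2).val * 2 ^ (k - 1))) *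
              (-1 : ℂ) ^ ((1 : ZMod 2).val * (ε j).val)) from Fin.sum_univ_two _]
    have h0 : (0 : ZMod 2).val = 0 := rfl
    have h1 : (1 : ZMod 2).val = 1 := rfl
    rw [h0, h1]
    simp only [zero_mul, one_mul, pow_zero, mul_one, zero_add, add_zero]
    rw [pow_add, hzh]
    have he : (ε j).val = 0 ∨ (ε j).val = 1 := by
      have := ZMod.val_lt (ε j); omega
    rcases he with h | h <;> rw [h] <;> ring
  simp only [step3]
  rw [Finset.prod_mul_distrib, Finset.prod_const, Finset.card_univ, Fintype.card_fin]
  rw [← mul_assoc, inv_mul_cancel₀ (by norm_num : ((2:ℂ)^k) ≠ 0), one_mul]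
  simp only [← pow_mul]
  rw [Finset.prod_pow_eq_pow_sum]
end
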